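/- arXiv:1201.6584 — 4 statements merged into one kernel-verified Lean document; each statement's English description precedes it below -/
import Mathlib

section
/- Let X and Y be real vector spaces and T : X → Y a surjective linear map. If A ⊆ X is a polyhedron, then the image T(A) is a polyhedron in Y. -/
/-- A subset `P` of a real vector space `X` is a polyhedron if there exist a positive
integer `n`, linear functionals `f₁,…,fₙ` on `X`, and reals `λ₁,…,λₙ` such that
`P = {x : fₖ x ≤ λₖ for all k}`. -/
def IsPolyhedron {X : Type*} [AddCommGroup X] [Module ℝ X] (P : Set X) : Prop :=
  ∃ n : ℕ, 0 < n ∧ ∃ (f : Fin n → X →ₗ[ℝ] ℝ) (lam : Fin n → ℝ),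
    P = {x : X | ∀ k, f k x ≤ lam k}

/-!
Choose a linear right inverse `S` of `T`. Then `y ∈ T '' A` iff `S y + z ∈ A` for some
`z ∈ ker T`, and membership in `A = {x | f x ≤ λ}` depends on `z` only through `f z ∈ ℝⁿ`,
which ranges over a finite-dimensional subspace `V`. So `T '' A` is the projection to `Y` of a
polyhedron in `Y × V`, and eliminating the coordinates of `V` one at a time by Fourier–Motzkin
keeps it a polyhedron.
-/

open Set

theorem exists_forall_le_and_forall_le_of_finite {α ι κ : Type*} [ConditionallyCompleteLattice α]
    [Nonempty α] [Finite ι] (l : ι → α) (u : κ → α) (hu : BddBelow (range u))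
    (h : ∀ i j, l i ≤ u j) : ∃ s, (∀ i, l i ≤ s) ∧ ∀ j, s ≤ u j := by
  obtain ⟨m, hm⟩ := hu
  have hbdd : BddAbove (insert m (range l)) := ((finite_range l).insert m).bddAbove
  refine ⟨sSup (insert m (range l)), fun i => le_csSup hbdd (mem_insert_of_mem _ ⟨i, rfl⟩),
    fun j => csSup_le (insert_nonempty _ _) ?_⟩
  rintro _ (rfl | ⟨i, rfl⟩)
  exacts [hm ⟨j, rfl⟩, h i j]

theorem exists_forall_mul_le_iff {ι : Type*} [Finite ι] (a b : ι → ℝ) :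
    (∃ s, ∀ k, a k * s ≤ b k) ↔
      (∀ k, a k = 0 → 0 ≤ b k) ∧ ∀ i j, 0 < a i → a j < 0 → a j * b i ≤ a i * b j := by
  constructor
  · rintro ⟨s, hs⟩
    refine ⟨fun k hk => by simpa [hk] using hs k, fun i j hi hj => ?_⟩
    nlinarith [mul_le_mul_of_nonpos_left (hs i) hj.le, mul_le_mul_of_nonneg_left (hs j) hi.le]
  · rintro ⟨hzero, hpair⟩
    -- `s` must lie above each `b j / a j` with `a j < 0` and below each `b i / a i` with `0 < a i`.
    obtain ⟨s, hlower, hupper⟩ := exists_forall_le_and_forall_le_of_finite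
      (fun j : {j // a j < 0} => b j / a j) (fun i : {i // 0 < a i} => b i / a i)
      (finite_range _).bddBelow fun ⟨j, hj⟩ ⟨i, hi⟩ => by
        rw [div_le_iff_of_neg hj, div_mul_eq_mul_div, div_le_iff₀ hi]
        linarith [hpair i j hi hj]
    refine ⟨s, fun k => ?_⟩
    rcases lt_trichotomy (a k) 0 with hk | hk | hk
    · rw [mul_comm, ← div_le_iff_of_neg hk]
      exact hlower ⟨k, hk⟩
    · simpa [hk] using hzero k hk
    · rw [mul_comm, ← le_div_iff₀ hk]
      exact hupper ⟨k, hk⟩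

section IsPolyhedron

variable {X Y : Type*} [AddCommGroup X] [Module ℝ X] [AddCommGroup Y] [Module ℝ Y]

theorem isPolyhedron_setOf_forall_le {ι : Type*} [Finite ι] (f : ι → X →ₗ[ℝ] ℝ) (μ : ι → ℝ) :
    IsPolyhedron {x | ∀ k, f k x ≤ μ k} := by
  obtain ⟨n, ⟨e⟩⟩ := Finite.exists_equiv_fin ι
  -- The trivial inequality `0 ≤ 0` is prepended since `IsPolyhedron` asks for `0 < n`.
  refine ⟨n + 1, n.succ_pos, Fin.cons 0 (fun j => f (e.symm j)),
    Fin.cons 0 (fun j => μ (e.symm j)), ?_⟩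
  ext x
  simp only [mem_ofPred_eq, Fin.forall_fin_succ, Fin.cons_zero, Fin.cons_succ,
    LinearMap.zero_apply, le_refl, true_and]
  exact e.symm.surjective.forall

theorem IsPolyhedron.inter {P Q : Set X} (hP : IsPolyhedron P) (hQ : IsPolyhedron Q) :
    IsPolyhedron (P ∩ Q) := by
  obtain ⟨n, -, f, lam, rfl⟩ := hP
  obtain ⟨m, -, g, mu, rfl⟩ := hQ
  convert isPolyhedron_setOf_forall_le (Sum.elim f g) (Sum.elim lam mu) using 1
  ext x
  simp [Sum.forall]

theorem IsPolyhedron.preimage {P : Set Y} (hP : IsPolyhedron P) (g : X →ₗ[ℝ] Y) :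
    IsPolyhedron (g ⁻¹' P) := by
  obtain ⟨n, hn, f, lam, rfl⟩ := hP
  exact ⟨n, hn, fun k => (f k).comp g, lam, rfl⟩

theorem IsPolyhedron.image_linearEquiv {P : Set X} (hP : IsPolyhedron P) (e : X ≃ₗ[ℝ] Y) :
    IsPolyhedron (e '' P) :=
  e.image_eq_preimage_symm P ▸ hP.preimage e.symm.toLinearMap

theorem IsPolyhedron.image_fst_of_prod_real {P : Set (Y × ℝ)} (hP : IsPolyhedron P) :
    IsPolyhedron (Prod.fst '' P) := by
  obtain ⟨n, -, f, lam, rfl⟩ := hP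
  set g : Fin n → Y →ₗ[ℝ] ℝ := fun k => (f k).comp (LinearMap.inl ℝ Y ℝ)
  set a : Fin n → ℝ := fun k => f k (0, 1)
  have hf : ∀ k y s, f k (y, s) = g k y + a k * s := fun k y s => by
    rw [show (y, s) = (y, 0) + s • ((0 : Y), (1 : ℝ)) by ext <;> simp, map_add, map_smul,
      smul_eq_mul, mul_comm]
    rfl
  have himage : Prod.fst '' {p | ∀ k, f k p ≤ lam k} =
      {y | ∀ k : {k // a k = 0}, g k y ≤ lam k} ∩
      {y | ∀ p : {p : Fin n × Fin n // 0 < a p.1 ∧ a p.2 < 0},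
        (a p.1.1 • g p.1.2 - a p.1.2 • g p.1.1) y ≤ a p.1.1 * lam p.1.2 - a p.1.2 * lam p.1.1} := by
    ext y
    have hproj : y ∈ Prod.fst '' {p | ∀ k, f k p ≤ lam k} ↔
        ∃ s, ∀ k, a k * s ≤ lam k - g k y := by
      simp only [mem_image, mem_ofPred_eq, Prod.exists, exists_and_right, exists_eq_right, hf,
        le_sub_iff_add_le']
    rw [hproj, exists_forall_mul_le_iff]
    simp only [mem_inter_iff, mem_ofPred_eq, Subtype.forall, Prod.forall, LinearMap.sub_apply,
      LinearMap.smul_apply, smul_eq_mul, sub_nonneg, and_imp]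
    refine and_congr Iff.rfl (forall₄_congr fun i j hi hj => ?_)
    constructor <;> intro h <;> linarith
  rw [himage]
  exact (isPolyhedron_setOf_forall_le _ _).inter (isPolyhedron_setOf_forall_le _ _)

theorem IsPolyhedron.image_fst_of_prod_pi {m : ℕ} {P : Set (Y × (Fin m → ℝ))}
    (hP : IsPolyhedron P) : IsPolyhedron (Prod.fst '' P) := by
  induction m generalizing Y with
  | zero =>
    convert hP.preimage (LinearMap.inl ℝ Y (Fin 0 → ℝ)) using 1
    ext y
    refine ⟨?_, fun hy => ⟨_, hy, rfl⟩⟩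
    rintro ⟨⟨y, t⟩, ht, rfl⟩
    rwa [Subsingleton.elim t 0] at ht
  | succ m ih =>
    let e : (Y × (Fin (m + 1) → ℝ)) ≃ₗ[ℝ] (Y × ℝ) × (Fin m → ℝ) :=
      ((LinearEquiv.refl ℝ Y).prodCongr (Fin.consLinearEquiv ℝ fun _ => ℝ).symm).trans
        (LinearEquiv.prodAssoc ℝ Y ℝ (Fin m → ℝ)).symm
    have hfst : Prod.fst '' P = Prod.fst '' (Prod.fst '' (e '' P)) := by
      simp only [image_image]
      rfl
    rw [hfst]
    exact (ih (hP.image_linearEquiv e)).image_fst_of_prod_real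

theorem IsPolyhedron.image_fst {V : Type*} [AddCommGroup V] [Module ℝ V] [FiniteDimensional ℝ V]
    {P : Set (Y × V)} (hP : IsPolyhedron P) : IsPolyhedron (Prod.fst '' P) := by
  let e := (LinearEquiv.refl ℝ Y).prodCongr (Module.finBasis ℝ V).equivFun
  have hfst : Prod.fst '' P = Prod.fst '' (e '' P) := by
    rw [image_image]
    rfl
  rw [hfst]
  exact (hP.image_linearEquiv e).image_fst_of_prod_pi

end IsPolyhedron

theorem LinearMap.exists_image_preimage_eq_image_fst_preimage {K X Y W : Type*} [DivisionRing K]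
    [AddCommGroup X] [Module K X] [AddCommGroup Y] [Module K Y] [AddCommGroup W] [Module K W]
    (T : X →ₗ[K] Y) (hT : Function.Surjective T) (Φ : X →ₗ[K] W) :
    ∃ L : Y × (ker T).map Φ →ₗ[K] X,
      ∀ Q : Set W, T '' (Φ ⁻¹' Q) = Prod.fst '' (L ⁻¹' (Φ ⁻¹' Q)) := by
  obtain ⟨S, hS⟩ := T.exists_rightInverse_of_surjective (range_eq_top.2 hT)
  obtain ⟨R, hR⟩ := (Φ.submoduleMap (ker T)).exists_rightInverse_of_surjective
    (range_eq_top.2 (Φ.submoduleMap_surjective _))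
  have hTS (y : Y) : T (S y) = y := congr($hS y)
  have hΦR (v : (ker T).map Φ) : Φ (R v) = v := congr(($hR v : W))
  refine ⟨S.coprod ((ker T).subtype ∘ₗ R), fun Q => Set.ext fun y => ⟨?_, ?_⟩⟩
  · rintro ⟨x, hx, rfl⟩
    have hker : x - S (T x) ∈ ker T := by simp [hTS]
    refine ⟨(T x, Φ.submoduleMap (ker T) ⟨_, hker⟩), ?_, rfl⟩
    simpa [hΦR] using hx
  · rintro ⟨⟨y, v⟩, hv, rfl⟩
    exact ⟨_, hv, by simp [hTS]⟩

theorem image_of_polyhedron_isPolyhedron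
    {X Y : Type*} [AddCommGroup X] [Module ℝ X] [AddCommGroup Y] [Module ℝ Y]
    (T : X →ₗ[ℝ] Y) (hT : Function.Surjective T)
    (A : Set X) (hA : IsPolyhedron A) :
    IsPolyhedron (T '' A) := by
  obtain ⟨n, -, f, lam, hAeq⟩ := id hA
  have hAΦ : A = LinearMap.pi f ⁻¹' Iic lam := by
    rw [hAeq]
    rfl
  obtain ⟨L, hL⟩ := T.exists_image_preimage_eq_image_fst_preimage hT (LinearMap.pi f)
  rw [hAΦ, hL, ← hAΦ]
  exact (hA.preimage L).image_fst
end

section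
/- Let X and Y be real vector spaces and T : X → Y a surjective linear map. If A ⊆ X is a polyhedral cone, then the image T(A) is a polyhedral cone in Y. -/
/-- A subset `P` of a real vector space `X` is a polyhedral cone if there exist a positive
integer `n` and linear functionals `f₁,…,fₙ` on `X` such that
`P = {x : fₖ x ≤ 0 for all k}`. -/
def IsPolyhedralCone {X : Type*} [AddCommGroup X] [Module ℝ X] (P : Set X) : Prop :=
  ∃ n : ℕ, 0 < n ∧ ∃ f : Fin n → X →ₗ[ℝ] ℝ,
    P = {x : X | ∀ k, f k x ≤ 0}

/-!
Write `A = {x | ∀ k, f k x ≤ 0}` and let `s` be a linear right inverse of `T`. Then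
`T '' A = s ⁻¹' (A + ker T)`, so it suffices that `A + W` is a polyhedral cone for every subspace
`W`. Through `Φ = (f k)ₖ : X → ℝⁿ` we have `A + W = Φ ⁻¹' (C + Φ W)` with `C` the nonpositive
orthant, and `Φ W` is finitely generated, so it suffices to add one line `ℝ ∙ c` at a time. That is
Fourier–Motzkin elimination: `x + t • c ∈ A` for some `t` iff every inequality with `f k c = 0`
holds at `x` and every lower bound on `t` lies below every upper bound, which are again
finitely many linear inequalities in `x`.
-/

open Pointwise

theorem exists_forall_le_forall_ge_of_finite {α ι κ : Type*} [ConditionallyCompleteLattice α]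
    [Finite ι] [Finite κ] (l : ι → α) (u : κ → α) (h : ∀ i j, l i ≤ u j) :
    ∃ t, (∀ i, l i ≤ t) ∧ ∀ j, t ≤ u j := by
  cases isEmpty_or_nonempty ι
  · exact ⟨⨅ j, u j, isEmptyElim, fun j => ciInf_le (Set.finite_range u).bddBelow j⟩
  · exact ⟨⨆ i, l i, fun i => le_ciSup (Set.finite_range l).bddAbove i,
      fun j => ciSup_le (h · j)⟩

theorem exists_forall_add_mul_nonpos_iff {ι : Type*} [Finite ι] (a b : ι → ℝ) :
    (∃ t, ∀ k, a k + t * b k ≤ 0) ↔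
      (∀ k, b k = 0 → a k ≤ 0) ∧ ∀ i, 0 < b i → ∀ j, b j < 0 → b i * a j - b j * a i ≤ 0 := by
  constructor
  · rintro ⟨t, ht⟩
    refine ⟨fun k hk => by simpa [hk] using ht k, fun i hi j hj => ?_⟩
    nlinarith [ht i, ht j]
  · rintro ⟨hzero, hpair⟩
    obtain ⟨t, hlow, hup⟩ := exists_forall_le_forall_ge_of_finite
      (fun j : {j // b j < 0} => a j / -b j) (fun i : {i // 0 < b i} => -a i / b i)
      fun ⟨j, hj⟩ ⟨i, hi⟩ => by
        rw [div_le_div_iff₀ (neg_pos.2 hj) hi]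
        linarith [hpair i hi j hj]
    refine ⟨t, fun k => ?_⟩
    rcases lt_trichotomy (b k) 0 with hk | hk | hk
    · have := (div_le_iff₀ (neg_pos.2 hk)).1 (hlow ⟨k, hk⟩)
      linarith
    · simpa [hk] using hzero k hk
    · have := (le_div_iff₀ hk).1 (hup ⟨k, hk⟩)
      linarith

theorem Submodule.mem_add_span_singleton {R M : Type*} [Ring R] [AddCommGroup M] [Module R M]
    {P : Set M} {c x : M} : x ∈ P + (R ∙ c : Set M) ↔ ∃ t : R, x + t • c ∈ P := by
  simp only [Set.mem_add, SetLike.mem_coe, Submodule.mem_span_singleton]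
  constructor
  · rintro ⟨p, hp, _, ⟨t, rfl⟩, rfl⟩
    exact ⟨-t, by simpa [add_assoc]⟩
  · rintro ⟨t, ht⟩
    exact ⟨_, ht, -t • c, ⟨-t, rfl⟩, by simp [add_assoc]⟩

theorem LinearMap.preimage_add_submodule {R M N : Type*} [Ring R] [AddCommGroup M] [Module R M]
    [AddCommGroup N] [Module R N] (φ : M →ₗ[R] N) (C : Set N) (W : Submodule R M) :
    φ ⁻¹' C + W = φ ⁻¹' (C + W.map φ) := by
  ext x
  simp only [Set.mem_add, Set.mem_preimage, SetLike.mem_coe, Submodule.mem_map]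
  constructor
  · rintro ⟨p, hp, w, hw, rfl⟩
    exact ⟨φ p, hp, φ w, ⟨w, hw, rfl⟩, (map_add φ p w).symm⟩
  · rintro ⟨c, hc, _, ⟨w, hw, rfl⟩, hx⟩
    exact ⟨x - w, by rwa [map_sub, ← hx, add_sub_cancel_right], w, hw, sub_add_cancel x w⟩

theorem LinearMap.image_eq_preimage_add_ker {R M N : Type*} [Ring R] [AddCommGroup M]
    [Module R M] [AddCommGroup N] [Module R N] {T : M →ₗ[R] N} {s : N →ₗ[R] M}
    (hs : T ∘ₗ s = LinearMap.id) (A : Set M) : T '' A = s ⁻¹' (A + LinearMap.ker T) := by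
  have hTs : ∀ y, T (s y) = y := LinearMap.congr_fun hs
  ext y
  simp only [Set.mem_image, Set.mem_preimage, Set.mem_add, SetLike.mem_coe, LinearMap.mem_ker]
  constructor
  · rintro ⟨a, ha, rfl⟩
    exact ⟨a, ha, s (T a) - a, by simp [hTs], add_sub_cancel a _⟩
  · rintro ⟨a, ha, k, hk, hsy⟩
    exact ⟨a, ha, by rw [← hTs y, ← hsy, map_add, hk, add_zero]⟩

namespace IsPolyhedralCone

variable {X : Type*} [AddCommGroup X] [Module ℝ X] {P : Set X}

theorem of_finite {ι : Type*} [Finite ι] (f : ι → X →ₗ[ℝ] ℝ) :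
    IsPolyhedralCone {x : X | ∀ k, f k x ≤ 0} := by
  obtain ⟨n, ⟨e⟩⟩ := Finite.exists_equiv_fin ι
  refine ⟨n + 1, n.succ_pos, Fin.cons 0 (f ∘ e.symm), ?_⟩
  ext x
  simpa [Fin.forall_fin_succ] using e.symm.forall_congr_right.symm

theorem preimage {Y : Type*} [AddCommGroup Y] [Module ℝ Y] (hP : IsPolyhedralCone P)
    (g : Y →ₗ[ℝ] X) :
    IsPolyhedralCone (g ⁻¹' P) := by
  obtain ⟨n, hn, f, rfl⟩ := hP
  exact ⟨n, hn, fun k => (f k).comp g, rfl⟩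

theorem add_span_singleton (hP : IsPolyhedralCone P) (c : X) :
    IsPolyhedralCone (P + (ℝ ∙ c : Set X)) := by
  obtain ⟨n, -, f, rfl⟩ := hP
  let g : {k // f k c = 0} ⊕ ({i // 0 < f i c} × {j // f j c < 0}) → X →ₗ[ℝ] ℝ :=
    Sum.elim (fun k => f k) fun p => f p.1 c • f p.2 - f p.2 c • f p.1
  convert of_finite g using 1
  ext x
  simp only [Submodule.mem_add_span_singleton, Set.mem_ofPred_eq, map_add, map_smul, smul_eq_mul,
    exists_forall_add_mul_nonpos_iff (fun k => f k x) (fun k => f k c)]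
  simp [g, Sum.forall, Prod.forall, Subtype.forall]

theorem add_submodule_of_fg (hP : IsPolyhedralCone P) {W : Submodule ℝ X} (hW : W.FG) :
    IsPolyhedralCone (P + (W : Set X)) := by
  induction W, hW using Submodule.fg_induction generalizing P with
  | singleton c => exact hP.add_span_singleton c
  | sup W₁ W₂ _ _ ih₁ ih₂ =>
    rw [Submodule.coe_sup, ← add_assoc]
    exact ih₂ (ih₁ hP)

theorem add_submodule (hP : IsPolyhedralCone P) (W : Submodule ℝ X) :
    IsPolyhedralCone (P + (W : Set X)) := by
  obtain ⟨n, hn, f, rfl⟩ := hP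
  have hC : IsPolyhedralCone {v : Fin n → ℝ | ∀ k, v k ≤ 0} := ⟨n, hn, LinearMap.proj, rfl⟩
  rw [show {x | ∀ k, f k x ≤ 0} = LinearMap.pi f ⁻¹' {v | ∀ k, v k ≤ 0} from rfl,
    LinearMap.preimage_add_submodule]
  exact (hC.add_submodule_of_fg (IsNoetherian.noetherian _)).preimage _

end IsPolyhedralCone

theorem image_of_polyhedralCone_isPolyhedralCone
    {X Y : Type*} [AddCommGroup X] [Module ℝ X] [AddCommGroup Y] [Module ℝ Y]
    (T : X →ₗ[ℝ] Y) (hT : Function.Surjective T)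
    (A : Set X) (hA : IsPolyhedralCone A) :
    IsPolyhedralCone (T '' A) := by
  obtain ⟨s, hs⟩ := T.exists_rightInverse_of_surjective (LinearMap.range_eq_top.mpr hT)
  rw [LinearMap.image_eq_preimage_add_ker hs]
  exact (hA.add_submodule _).preimage s
end

section
/- (Sard quotient theorem, Fréchet version.) Let X and Y be real Fréchet spaces, let Z be a real topological vector space, and let S : X → Y and T : X → Z be continuous linear maps with S surjective. If ker S ⊆ ker T, then there exists a unique continuous linear map R : Y → Z such that T = R ∘ S. -/
/-!
`S` is an open map by the open mapping theorem for Fréchet spaces, hence a quotient map; so the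
linear map `R` with `R ∘ S = T`, which exists because `ker S ⊆ ker T`, is continuous since
`R ∘ S = T` is.

The open mapping theorem is proved as for Banach spaces. Baire's theorem, applied to the covering
of `Y` by the closed sets `closure (cⁿ • S '' W)` with `‖c‖ > 1`, shows that `closure (S '' V)` is a
neighbourhood of `0` for every neighbourhood `V`. Completeness of `X` then removes the closure:
a point of `closure (S '' V₁)` is approximated successively by images of points `xₙ ∈ Vₙ₊₁`, where
`Vₙ₊₁ + Vₙ₊₁ ⊆ Vₙ`, and the series `∑ xₙ` converges to a preimage lying in `V₀`.
-/

open Filter Set Topology Function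
open scoped Pointwise Uniformity

theorem exists_hasAntitoneBasis_nhds_zero_add_subset {M : Type*} [TopologicalSpace M] [AddMonoid M]
    [ContinuousAdd M] [FirstCountableTopology M] {U : Set M} (hU : U ∈ 𝓝 0) :
    ∃ V : ℕ → Set M, (𝓝 0).HasAntitoneBasis V ∧ V 0 ⊆ U ∧ ∀ n, V (n + 1) + V (n + 1) ⊆ V n := by
  obtain ⟨b, hb⟩ := (𝓝 (0 : M)).exists_antitone_basis
  have half : ∀ A ∈ 𝓝 (0 : M), ∃ B ∈ 𝓝 (0 : M), B + B ⊆ A := fun A hA ↦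
    (exists_nhds_zero_half hA).imp fun B ⟨hB, hBA⟩ ↦ ⟨hB, add_subset_iff.2 hBA⟩
  choose! h hh_mem hh_add using half
  let V : ℕ → Set M := fun n ↦ Nat.rec (U ∩ b 0) (fun n A ↦ h A ∩ b (n + 1)) n
  have hV_mem : ∀ n, V n ∈ 𝓝 0 := by
    intro n
    induction n with
    | zero => exact inter_mem hU (hb.mem 0)
    | succ n ih => exact inter_mem (hh_mem _ ih) (hb.mem _)
  have hV_add : ∀ n, V (n + 1) + V (n + 1) ⊆ V n := fun n ↦
    (add_subset_add inter_subset_left inter_subset_left).trans (hh_add _ (hV_mem n))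
  have hV_b : ∀ n, V n ⊆ b n := by
    rintro (_ | n) <;> exact inter_subset_right
  have hV_anti : Antitone V := antitone_nat_of_succ_le fun n x hx ↦
    hV_add n (by simpa using add_mem_add hx (mem_of_mem_nhds (hV_mem (n + 1))))
  refine ⟨V, ⟨hb.1.to_hasBasis' (fun n _ ↦ ⟨n, trivial, hV_b n⟩) fun n _ ↦ hV_mem n, hV_anti⟩,
    inter_subset_left, hV_add⟩

theorem sum_range_mem_of_add_subset {M : Type*} [AddCommMonoid M] {V : ℕ → Set M}
    (hV_zero : ∀ n, (0 : M) ∈ V n) (hV_add : ∀ n, V (n + 1) + V (n + 1) ⊆ V n) {x : ℕ → M}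
    (hx : ∀ n, x n ∈ V (n + 1)) (n k : ℕ) : ∑ i ∈ Finset.range k, x (n + i) ∈ V n := by
  induction k generalizing n with
  | zero => simpa using hV_zero n
  | succ k ih =>
    rw [Finset.sum_range_succ']
    simp_rw [← add_assoc, add_right_comm n _ 1, add_zero]
    exact hV_add n (add_mem_add (ih (n + 1)) (hx n))

theorem cauchySeq_sum_range_of_hasBasis {G : Type*} [AddCommGroup G] [UniformSpace G]
    [IsUniformAddGroup G] {V : ℕ → Set G} (hV : (𝓝 0).HasBasis (fun _ ↦ True) V) {x : ℕ → G}
    (hx : ∀ n k, ∑ i ∈ Finset.range k, x (n + i) ∈ V n) :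
    CauchySeq fun n ↦ ∑ i ∈ Finset.range n, x i := by
  have hU : (𝓤 G).HasBasis (fun _ ↦ True) fun n ↦ {p : G × G | p.1 - p.2 ∈ V n} := by
    rw [uniformity_eq_comap_nhds_zero_swapped]
    exact hV.comap _
  rw [hU.cauchySeq_iff']
  refine fun N _ ↦ ⟨N, fun n hn ↦ ?_⟩
  obtain ⟨k, rfl⟩ := Nat.exists_eq_add_of_le hn
  simpa [Finset.sum_range_add] using hx N k

theorem tendsto_of_mem_closure_image {α β : Type*} [TopologicalSpace α] [TopologicalSpace β]
    [RegularSpace β] {f : α → β} {a : α} {b : β} (hf : Tendsto f (𝓝 a) (𝓝 b))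
    {V : ℕ → Set α} (hV : (𝓝 a).HasAntitoneBasis V) {z : ℕ → β}
    (hz : ∀ n, z n ∈ closure (f '' V n)) : Tendsto z atTop (𝓝 b) := by
  refine (closed_nhds_basis b).tendsto_right_iff.2 fun N ⟨hN, hN_closed⟩ ↦ ?_
  filter_upwards [hV.tendsto_smallSets.eventually (eventually_smallSets_subset.2 (hf hN))]
    with n hn
  exact closure_minimal (image_subset_iff.2 hn) hN_closed (hz n)

section AlmostOpen

variable {G H : Type*} [AddCommGroup G]
  [AddCommGroup H] [TopologicalSpace H] [IsTopologicalAddGroup H]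

theorem exists_sub_mem_of_mem_closure {y : H} {s N : Set H} (hy : y ∈ closure s)
    (hN : N ∈ 𝓝 0) : ∃ a ∈ s, y - a ∈ N := by
  obtain ⟨a, ha, haN⟩ := mem_closure_iff_nhds_zero.1 hy (-N) (neg_mem_nhds_zero H hN)
  exact ⟨a, ha, by simpa using haN⟩

theorem exists_seq_sum_approx_of_mem_closure_image (f : G →+ H) {V : ℕ → Set G}
    (hV : ∀ n, closure (f '' V n) ∈ 𝓝 0) {y : H} (hy : y ∈ closure (f '' V 0)) :
    ∃ x : ℕ → G, (∀ n, x n ∈ V n) ∧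
      ∀ n, y - f (∑ i ∈ Finset.range n, x i) ∈ closure (f '' V n) := by
  have step : ∀ n z, z ∈ closure (f '' V n) → ∃ a ∈ V n, z - f a ∈ closure (f '' V (n + 1)) :=
    fun n z hz ↦ by
      obtain ⟨_, ⟨a, ha, rfl⟩, h⟩ := exists_sub_mem_of_mem_closure hz (hV (n + 1))
      exact ⟨a, ha, h⟩
  choose! g hg_mem hg_sub using step
  let z : ℕ → H := fun n ↦ Nat.rec y (fun n w ↦ w - f (g n w)) n
  have hz : ∀ n, z n ∈ closure (f '' V n) := by
    intro n
    induction n with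
    | zero => exact hy
    | succ n ih => exact hg_sub n _ ih
  have hz_eq : ∀ n, z n = y - f (∑ i ∈ Finset.range n, g i (z i)) := by
    intro n
    induction n with
    | zero => simp [z]
    | succ n ih =>
      rw [Finset.sum_range_succ, map_add, ← sub_sub, ← ih]
  exact ⟨fun n ↦ g n (z n), fun n ↦ hg_mem n _ (hz n), fun n ↦ hz_eq n ▸ hz n⟩

variable [UniformSpace G] [IsUniformAddGroup G] [CompleteSpace G] [FirstCountableTopology G]
  [T2Space H]

theorem AddMonoidHom.image_mem_nhds_zero_of_closure_image (f : G →+ H) (hf : Continuous f)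
    (hcl : ∀ U ∈ 𝓝 (0 : G), closure (f '' U) ∈ 𝓝 0) {U : Set G} (hU : U ∈ 𝓝 0) :
    f '' U ∈ 𝓝 0 := by
  obtain ⟨U', hU', hU'_closed, hU'U⟩ := exists_mem_nhds_isClosed_subset hU
  obtain ⟨V, hV, hV_U', hV_add⟩ := exists_hasAntitoneBasis_nhds_zero_add_subset hU'
  refine mem_of_superset (hcl _ (hV.mem 1)) fun y hy ↦ ?_
  obtain ⟨x, hx, hx_approx⟩ :=
    exists_seq_sum_approx_of_mem_closure_image f (V := fun n ↦ V (n + 1))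
      (fun n ↦ hcl _ (hV.mem _)) hy
  have hsegment := sum_range_mem_of_add_subset (fun n ↦ mem_of_mem_nhds (hV.mem n)) hV_add hx
  obtain ⟨x₀, hx₀⟩ := cauchySeq_tendsto_of_complete (cauchySeq_sum_range_of_hasBasis hV.1 hsegment)
  have hlim : Tendsto (fun n ↦ y - f (∑ i ∈ Finset.range n, x i)) atTop (𝓝 (y - f x₀)) :=
    tendsto_const_nhds.sub ((hf.tendsto x₀).comp hx₀)
  have hlim_zero : Tendsto (fun n ↦ y - f (∑ i ∈ Finset.range n, x i)) atTop (𝓝 0) :=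
    tendsto_of_mem_closure_image (map_zero f ▸ hf.tendsto 0)
      (hV.comp_mono (fun _ _ h ↦ Nat.succ_le_succ h) (tendsto_add_atTop_nat 1)) hx_approx
  have hx₀_mem : x₀ ∈ U' := hU'_closed.mem_of_tendsto hx₀
    (Eventually.of_forall fun n ↦ hV_U' (by simpa using hsegment 0 n))
  exact ⟨x₀, hU'U hx₀_mem, (sub_eq_zero.1 (tendsto_nhds_unique hlim hlim_zero)).symm⟩

end AlmostOpen

theorem Absorbent.nonempty_interior_closure {𝕜 E : Type*} [NontriviallyNormedField 𝕜]
    [TopologicalSpace E] [BaireSpace E] [Nonempty E] [MulAction 𝕜 E] [ContinuousConstSMul 𝕜 E]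
    {A : Set E} (hA : Absorbent 𝕜 A) : (interior (closure A)).Nonempty := by
  obtain ⟨c, hc⟩ := NormedField.exists_one_lt_norm 𝕜
  have hcover : ⋃ n : ℕ, closure (c ^ n • A) = univ := by
    refine eq_univ_of_forall fun x ↦ mem_iUnion.2 ?_
    obtain ⟨r, hr⟩ := absorbs_iff_norm.1 (hA x)
    obtain ⟨n, hn⟩ := pow_unbounded_of_one_lt r hc
    exact ⟨n, subset_closure (hr (c ^ n) (by rw [norm_pow]; exact hn.le) rfl)⟩
  obtain ⟨n, hn⟩ := nonempty_interior_of_iUnion_of_closed (fun _ ↦ isClosed_closure) hcover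
  have hc_pow : c ^ n ≠ 0 := pow_ne_zero n (norm_pos_iff.1 (one_pos.trans hc))
  rw [closure_smul₀' hc_pow, interior_smul₀ hc_pow] at hn
  exact smul_set_nonempty.1 hn

theorem sub_self_mem_nhds_zero_of_nonempty_interior {H : Type*} [AddGroup H] [TopologicalSpace H]
    [IsTopologicalAddGroup H] {s : Set H} (hs : (interior s).Nonempty) : s - s ∈ 𝓝 0 := by
  obtain ⟨y, hy⟩ := hs
  have hpre : (· + y) ⁻¹' interior s ∈ 𝓝 0 :=
    (isOpen_interior.preimage (continuous_add_const y)).mem_nhds (by simpa using hy)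
  refine mem_of_superset hpre fun z hz ↦ ?_
  simpa using sub_mem_sub (interior_subset hz) (interior_subset hy)

theorem Absorbent.image {R E F : Type*} [Semiring R] [AddCommMonoid E] [Module R E]
    [AddCommMonoid F] [Module R F] [Bornology R] {A : Set E} (hA : Absorbent R A)
    (S : E →ₗ[R] F) (hS : Surjective S) : Absorbent R (S '' A) := by
  intro y
  obtain ⟨x, rfl⟩ := hS y
  filter_upwards [hA x] with a ha
  simpa [image_smul_set] using image_mono (f := S) ha

theorem LinearMap.closure_image_mem_nhds_zero {𝕜 E F : Type*} [NontriviallyNormedField 𝕜]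
    [AddCommGroup E] [Module 𝕜 E] [TopologicalSpace E] [IsTopologicalAddGroup E]
    [ContinuousSMul 𝕜 E] [AddCommGroup F] [Module 𝕜 F] [TopologicalSpace F]
    [IsTopologicalAddGroup F] [ContinuousConstSMul 𝕜 F] [BaireSpace F]
    (S : E →ₗ[𝕜] F) (hS : Surjective S) {V : Set E} (hV : V ∈ 𝓝 0) :
    closure (S '' V) ∈ 𝓝 0 := by
  obtain ⟨W, hW, -, hW_neg, hW_add⟩ := exists_closed_nhds_zero_neg_eq_add_subset hV
  have hA : (interior (closure (S '' W))).Nonempty :=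
    ((absorbent_nhds_zero hW).image S hS).nonempty_interior_closure
  refine mem_of_superset (sub_self_mem_nhds_zero_of_nonempty_interior hA) ?_
  rintro _ ⟨a, ha, b, hb, rfl⟩
  refine map_mem_closure₂ continuous_sub ha hb ?_
  rintro _ ⟨w, hw, rfl⟩ _ ⟨w', hw', rfl⟩
  refine ⟨w + -w', hW_add (add_mem_add hw (hW_neg ▸ neg_mem_neg.2 hw')), ?_⟩
  simp [sub_eq_add_neg]

theorem ContinuousLinearMap.isOpenMap_of_baireSpace {𝕜 E F : Type*} [NontriviallyNormedField 𝕜]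
    [AddCommGroup E] [Module 𝕜 E] [UniformSpace E] [IsUniformAddGroup E] [CompleteSpace E]
    [FirstCountableTopology E] [ContinuousSMul 𝕜 E] [AddCommGroup F] [Module 𝕜 F]
    [TopologicalSpace F] [IsTopologicalAddGroup F] [T2Space F] [ContinuousConstSMul 𝕜 F]
    [BaireSpace F] (S : E →L[𝕜] F) (hS : Surjective S) : IsOpenMap S :=
  IsTopologicalAddGroup.isOpenMap_iff_nhds_zero.2 fun _ hU ↦ mem_of_superset
    ((S : E →+ F).image_mem_nhds_zero_of_closure_image S.continuous
      (fun _ ↦ (S : E →ₗ[𝕜] F).closure_image_mem_nhds_zero hS) hU)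
    (image_preimage_subset _ _)

theorem LinearMap.exists_comp_eq_of_ker_le {R E F G : Type*} [Ring R] [AddCommGroup E]
    [Module R E] [AddCommGroup F] [Module R F] [AddCommGroup G] [Module R G]
    {S : E →ₗ[R] F} (hS : Surjective S) {T : E →ₗ[R] G} (hker : ker S ≤ ker T) :
    ∃ L : F →ₗ[R] G, L ∘ₗ S = T :=
  ⟨(ker S).liftQ T hker ∘ₗ (S.quotKerEquivOfSurjective hS).symm, by
    ext x
    simp⟩

theorem ContinuousLinearMap.existsUnique_comp_eq_of_isQuotientMap {R E F G : Type*} [Ring R]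
    [AddCommGroup E] [Module R E] [TopologicalSpace E] [AddCommGroup F] [Module R F]
    [TopologicalSpace F] [AddCommGroup G] [Module R G] [TopologicalSpace G]
    (S : E →L[R] F) (hS : IsQuotientMap S) (T : E →L[R] G)
    (hker : LinearMap.ker (S : E →ₗ[R] F) ≤ LinearMap.ker (T : E →ₗ[R] G)) :
    ∃! L : F →L[R] G, T = L.comp S := by
  obtain ⟨L, hL⟩ := LinearMap.exists_comp_eq_of_ker_le hS.surjective hker
  have hL_apply (x : E) : L (S x) = T x := LinearMap.congr_fun hL x
  have hL_cont : Continuous L :=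
    hS.continuous_iff.2 (by simpa only [comp_def, hL_apply] using T.continuous)
  refine ⟨⟨L, hL_cont⟩, ContinuousLinearMap.ext fun x ↦ (hL_apply x).symm, fun L' hL' ↦ ?_⟩
  ext y
  obtain ⟨x, rfl⟩ := hS.surjective y
  simp [hL', hL_apply]

theorem sard_quotient_frechet_general
    {X Y Z : Type*}
    [AddCommGroup X] [Module ℝ X] [UniformSpace X] [IsUniformAddGroup X]
    [ContinuousSMul ℝ X] [CompleteSpace X] [TopologicalSpace.MetrizableSpace X]
    [AddCommGroup Y] [Module ℝ Y] [UniformSpace Y] [IsUniformAddGroup Y]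
    [ContinuousSMul ℝ Y] [CompleteSpace Y] [TopologicalSpace.MetrizableSpace Y]
    [AddCommGroup Z] [Module ℝ Z] [TopologicalSpace Z]
    (S : X →L[ℝ] Y) (T : X →L[ℝ] Z)
    (hS : Function.Surjective S)
    (hker : LinearMap.ker (S : X →ₗ[ℝ] Y) ≤ LinearMap.ker (T : X →ₗ[ℝ] Z)) :
    ∃! R : Y →L[ℝ] Z, T = R.comp S := by
  have : (𝓤 Y).IsCountablyGenerated := IsUniformAddGroup.uniformity_countably_generated
  exact S.existsUnique_comp_eq_of_isQuotientMap
    ((S.isOpenMap_of_baireSpace hS).isQuotientMap S.continuous hS) T hker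

/-- **Sard quotient theorem, Fréchet version.** If `X, Y` are real Fréchet spaces
(complete metrizable topological vector spaces), `Z` is a real topological vector space,
`S : X → Y` and `T : X → Z` are continuous linear maps, `S` is surjective and
`ker S ⊆ ker T`, then there is a unique continuous linear map `R : Y → Z` with
`T = R ∘ S`. -/
theorem sard_quotient_frechet
    {X Y Z : Type*}
    [AddCommGroup X] [Module ℝ X] [UniformSpace X] [IsUniformAddGroup X]
    [ContinuousSMul ℝ X] [CompleteSpace X] [TopologicalSpace.MetrizableSpace X]
    [AddCommGroup Y] [Module ℝ Y] [UniformSpace Y] [IsUniformAddGroup Y]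
    [ContinuousSMul ℝ Y] [CompleteSpace Y] [TopologicalSpace.MetrizableSpace Y]
    [AddCommGroup Z] [Module ℝ Z] [TopologicalSpace Z] [IsTopologicalAddGroup Z]
    [ContinuousSMul ℝ Z]
    (S : X →L[ℝ] Y) (T : X →L[ℝ] Z)
    (hS : Function.Surjective S)
    (hker : LinearMap.ker (S : X →ₗ[ℝ] Y) ≤ LinearMap.ker (T : X →ₗ[ℝ] Z)) :
    ∃! R : Y →L[ℝ] Z, T = R.comp S :=
  sard_quotient_frechet_general S T hS hker
end

section
/- Let X be a real vector space, n a positive integer, f₁,…,fₙ linear functionals on X, λ₁,…,λₙ real numbers, and ξ ∈ X a nonzero vector. Set A = {x ∈ X : fₖ(x) ≤ λₖ for all k}, K₊ = {k : fₖ(ξ) > 0}, K₋ = {k : fₖ(ξ) < 0}, K₀ = {k : fₖ(ξ) = 0}, A₁ = {x ∈ X : fᵢ(x) − (fᵢ(ξ)/fⱼ(ξ)) fⱼ(x) ≤ λᵢ − (fᵢ(ξ)/fⱼ(ξ)) λⱼ for all i ∈ K₊ and j ∈ K₋} (with A₁ = X if K₊ or K₋ is empty), and A₂ = {x ∈ X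 : fₖ(x) ≤ λₖ for all k ∈ K₀} (with A₂ = X if K₀ is empty). Then for every x ∈ A₁ ∩ A₂ there exists t ∈ ℝ with x + tξ ∈ A; consequently A₁ ∩ A₂ = A + ℝξ, and for any linear map T with T(ξ) = 0 one has T(A₁ ∩ A₂) = T(A). -/
/-! This is one step of Fourier–Motzkin elimination. Along the line `x + ℝξ` the constraint
`fₖ (x + tξ) ≤ λₖ` reads `t ≤ gₖ` for `k ∈ K₊`, `t ≥ gₖ` for `k ∈ K₋` and `fₖ x ≤ λₖ` for `k ∈ K₀`,
where `gₖ = (λₖ - fₖ x) / fₖ ξ`. The inequalities defining `A₁` say exactly `gⱼ ≤ gᵢ` for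
`i ∈ K₊`, `j ∈ K₋`, so a common `t` exists between the finitely many lower and upper bounds.
Conversely, these inequalities are unchanged by translation along `ξ` and hold on `A`. -/

open Pointwise

theorem exists_forall_le_and_forall_le {ι α : Type*} [Finite ι] [LinearOrder α] [Nonempty α]
    (g : ι → α) (p q : ι → Prop) (h : ∀ i j, p i → q j → g j ≤ g i) :
    ∃ t, (∀ j, q j → g j ≤ t) ∧ ∀ i, p i → t ≤ g i := by
  by_cases hq : ∃ j, q j
  · obtain ⟨j₀, hj₀, hmax⟩ := Set.exists_max_image {j | q j} g (Set.toFinite _) hq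
    exact ⟨g j₀, hmax, fun i hi => h i j₀ hi hj₀⟩
  · obtain ⟨t, ht⟩ := ((Set.toFinite {i | p i}).image g).bddBelow
    exact ⟨t, fun j hj => absurd ⟨j, hj⟩ hq, fun i hi => ht ⟨i, hi, rfl⟩⟩

theorem exists_forall_add_mul_le {ι : Type*} [Finite ι] (a b c : ι → ℝ)
    (h₁ : ∀ i j, 0 < c i → c j < 0 → a i - c i / c j * a j ≤ b i - c i / c j * b j)
    (h₂ : ∀ k, c k = 0 → a k ≤ b k) :
    ∃ t, ∀ k, a k + t * c k ≤ b k := by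
  set g : ι → ℝ := fun k => (b k - a k) / c k
  have hpair : ∀ i j, 0 < c i → c j < 0 → g j ≤ g i := by
    intro i j hi hj
    rw [le_div_iff₀ hi]
    have : c i / c j * (b j - a j) = g j * c i := by simp only [g]; ring
    linarith [h₁ i j hi hj]
  obtain ⟨t, hlow, hup⟩ := exists_forall_le_and_forall_le g _ _ hpair
  refine ⟨t, fun k => ?_⟩
  rcases lt_trichotomy (c k) 0 with hk | hk | hk
  · linarith [(div_le_iff_of_neg hk).1 (hlow k hk)]
  · simpa [hk] using h₂ k hk
  · linarith [(le_div_iff₀ hk).1 (hup k hk)]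

section

variable {ι X : Type*} [AddCommGroup X] [Module ℝ X] (f : ι → X →ₗ[ℝ] ℝ) (lam : ι → ℝ) (ξ : X)

theorem exists_forall_map_add_smul_le [Finite ι] {x : X}
    (h₁ : ∀ i j, 0 < f i ξ → f j ξ < 0 →
      f i x - (f i ξ / f j ξ) * f j x ≤ lam i - (f i ξ / f j ξ) * lam j)
    (h₂ : ∀ k, f k ξ = 0 → f k x ≤ lam k) :
    ∃ t : ℝ, ∀ k, f k (x + t • ξ) ≤ lam k := by
  simpa only [map_add, map_smul, smul_eq_mul] using
    exists_forall_add_mul_le (fun k => f k x) lam (fun k => f k ξ) h₁ h₂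

theorem map_sub_div_mul_map_add_smul (x : X) (t : ℝ) {i j : ι} (hj : f j ξ ≠ 0) :
    f i (x + t • ξ) - (f i ξ / f j ξ) * f j (x + t • ξ) = f i x - (f i ξ / f j ξ) * f j x := by
  simp only [map_add, map_smul, smul_eq_mul]
  field_simp
  ring

theorem map_sub_div_mul_map_le_of_forall_le {a : X} (ha : ∀ k, f k a ≤ lam k) {i j : ι}
    (hi : 0 < f i ξ) (hj : f j ξ < 0) :
    f i a - (f i ξ / f j ξ) * f j a ≤ lam i - (f i ξ / f j ξ) * lam j := by
  have : f i ξ / f j ξ * f j a ≥ f i ξ / f j ξ * lam j :=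
    mul_le_mul_of_nonpos_left (ha j) (div_neg_of_pos_of_neg hi hj).le
  linarith [ha i]

end

theorem image_add_range_smul_eq {X Z : Type*} [AddCommGroup X] [Module ℝ X] [AddCommGroup Z]
    [Module ℝ Z] (T : X →ₗ[ℝ] Z) {ξ : X} (hT : T ξ = 0) (A : Set X) :
    T '' (A + Set.range (fun t : ℝ => t • ξ)) = T '' A := by
  have : T '' Set.range (fun t : ℝ => t • ξ) = 0 := by
    rw [← Set.range_comp]
    simp [Function.comp_def, hT, Set.singleton_zero]
  rw [Set.image_add, this, add_zero]

theorem inter_eq_add_span_and_image_eq_general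
    {X : Type*} [AddCommGroup X] [Module ℝ X]
    (n : ℕ) (f : Fin n → X →ₗ[ℝ] ℝ) (lam : Fin n → ℝ)
    (ξ : X)
    (A A₁ A₂ : Set X)
    (hA : A = {x : X | ∀ k, f k x ≤ lam k})
    (hA₁ : A₁ = {x : X | ∀ i j, 0 < f i ξ → f j ξ < 0 →
        f i x - (f i ξ / f j ξ) * f j x ≤ lam i - (f i ξ / f j ξ) * lam j})
    (hA₂ : A₂ = {x : X | ∀ k, f k ξ = 0 → f k x ≤ lam k}) :
    (∀ x ∈ A₁ ∩ A₂, ∃ t : ℝ, x + t • ξ ∈ A) ∧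
      A₁ ∩ A₂ = A + Set.range (fun t : ℝ => t • ξ) ∧
      ∀ (Z : Type*) [AddCommGroup Z] [Module ℝ Z] (T : X →ₗ[ℝ] Z), T ξ = 0 →
        T '' (A₁ ∩ A₂) = T '' A := by
  have htranslate : ∀ x ∈ A₁ ∩ A₂, ∃ t : ℝ, x + t • ξ ∈ A := by
    rintro x ⟨hx₁, hx₂⟩
    rw [hA₁] at hx₁
    rw [hA₂] at hx₂
    rw [hA]
    exact exists_forall_map_add_smul_le f lam ξ hx₁ hx₂
  have hsub : A + Set.range (fun t : ℝ => t • ξ) ⊆ A₁ ∩ A₂ := by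
    rintro _ ⟨a, ha, _, ⟨t, rfl⟩, rfl⟩
    rw [hA] at ha
    rw [hA₁, hA₂]
    refine ⟨fun i j hi hj => ?_, fun k hk => ?_⟩
    · rw [map_sub_div_mul_map_add_smul f ξ a t hj.ne]
      exact map_sub_div_mul_map_le_of_forall_le f lam ξ ha hi hj
    · simpa [hk] using ha k
  have heq : A₁ ∩ A₂ = A + Set.range (fun t : ℝ => t • ξ) := by
    refine subset_antisymm (fun x hx => ?_) hsub
    obtain ⟨t, ht⟩ := htranslate x hx
    exact ⟨x + t • ξ, ht, (-t) • ξ, ⟨-t, rfl⟩, by simp⟩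
  exact ⟨htranslate, heq, fun Z _ _ T hT => by rw [heq, image_add_range_smul_eq T hT]⟩

/-- Let `f₁,…,fₙ` be linear functionals on a real vector space `X`, `λ₁,…,λₙ` reals,
and `ξ ≠ 0`. With `A = {x | ∀ k, fₖ x ≤ λₖ}`,
`A₁ = {x | fᵢ x - (fᵢ ξ / fⱼ ξ) * fⱼ x ≤ λᵢ - (fᵢ ξ / fⱼ ξ) * λⱼ` for all `i` with
`fᵢ ξ > 0` and `j` with `fⱼ ξ < 0}` (so `A₁ = X` when one of these index sets is empty),
and `A₂ = {x | fₖ x ≤ λₖ` for all `k` with `fₖ ξ = 0}` (so `A₂ = X` when this index set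
is empty): every `x ∈ A₁ ∩ A₂` can be translated along `ξ` into `A`; consequently
`A₁ ∩ A₂ = A + ℝξ` and `T (A₁ ∩ A₂) = T A` for every linear map `T` killing `ξ`. -/
theorem inter_eq_add_span_and_image_eq
    {X : Type*} [AddCommGroup X] [Module ℝ X]
    (n : ℕ) (hn : 0 < n) (f : Fin n → X →ₗ[ℝ] ℝ) (lam : Fin n → ℝ)
    (ξ : X) (hξ : ξ ≠ 0)
    (A A₁ A₂ : Set X)
    (hA : A = {x : X | ∀ k, f k x ≤ lam k})
    (hA₁ : A₁ = {x : X | ∀ i j, 0 < f i ξ → f j ξ < 0 →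
        f i x - (f i ξ / f j ξ) * f j x ≤ lam i - (f i ξ / f j ξ) * lam j})
    (hA₂ : A₂ = {x : X | ∀ k, f k ξ = 0 → f k x ≤ lam k}) :
    (∀ x ∈ A₁ ∩ A₂, ∃ t : ℝ, x + t • ξ ∈ A) ∧
      A₁ ∩ A₂ = A + Set.range (fun t : ℝ => t • ξ) ∧
      ∀ (Z : Type*) [AddCommGroup Z] [Module ℝ Z] (T : X →ₗ[ℝ] Z), T ξ = 0 →
        T '' (A₁ ∩ A₂) = T '' A :=
  inter_eq_add_span_and_image_eq_general n f lam ξ A A₁ A₂ hA hA₁ hA₂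
end
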